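/- Let r ≥ 1, let η ∈ ℂ satisfy |η| = 1 and η ≠ 1, and let S ⊆ Fin r with |S| ≥ 2. Define the gate G_{η,S} on ℂ^({0,1}^r) by (G_{η,S} ψ)(x) = η·ψ(x) if x_i = 1 for all i ∈ S, and (G_{η,S} ψ)(x) = ψ(x) otherwise. Let ψ be any r-qubit state vector and let φ = G_{η,S} ψ. Then at least one of the following holds: (1) ψ is S-entangled; (2) φ is S-entangled; (3) G_{η,S} ψ = ψ, or there exists T ⊊ S with G_{η,S} ψ = G_{η,T} ψ ≠ ψ. -/

import Mathlib

open scoped BigOperators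

/-- The state space of `r` qubits: amplitudes indexed by bit strings of length `r`. -/
abbrev QState (r : ℕ) := (Fin r → Bool) → ℂ

/-- A unit vector (state vector): Euclidean norm 1. -/
def UnitVec {r : ℕ} (ψ : QState r) : Prop := ∑ x, ‖ψ x‖ ^ 2 = 1

/-- The gate `G_{η,S}` on the qubits in `S`: multiplies the amplitude by `η` exactly
when all bits in `S` are `1`. -/
noncomputable def gGate {r : ℕ} (η : ℂ) (S : Finset (Fin r)) (ψ : QState r) : QState r :=
  fun x => if ∀ i ∈ S, x i = true then η * ψ x else ψ x

/-- `{A, B}` is a bipartition of the qubits. -/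
def Bipartition {r : ℕ} (A B : Finset (Fin r)) : Prop :=
  A.Nonempty ∧ B.Nonempty ∧ Disjoint A B ∧ A ∪ B = Finset.univ

/-- `ψ` separates at `{A, B}`: it is a tensor product of a state on the qubits in `A`
and a state on the qubits in `B`. -/
def SeparatesAt {r : ℕ} (ψ : QState r) (A B : Finset (Fin r)) : Prop :=
  ∃ (ψA : ({i : Fin r // i ∈ A} → Bool) → ℂ) (ψB : ({i : Fin r // i ∈ B} → Bool) → ℂ),
    ∀ x : Fin r → Bool, ψ x = ψA (fun i => x i.1) * ψB (fun i => x i.1)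

/-- `ψ` is `S`-separable: it separates at some bipartition both of whose parts
meet `S`. -/
def SSeparable {r : ℕ} (S : Finset (Fin r)) (ψ : QState r) : Prop :=
  ∃ A B : Finset (Fin r),
    Bipartition A B ∧ (A ∩ S).Nonempty ∧ (B ∩ S).Nonempty ∧ SeparatesAt ψ A B

/-- `ψ` is `S`-entangled: not `S`-separable. -/
def SEntangled {r : ℕ} (S : Finset (Fin r)) (ψ : QState r) : Prop :=
  ¬ SSeparable S ψ

/-!
Let `T ⊆ S` consist of the qubits of `S` at which some point of the support of `ψ` has a zero.
The gate acts as `G_{η,T}`, and trivially unless some support point `u` is all ones on `S`; so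
only `T = S` needs an argument, with `ψ` and `G_{η,S} ψ` split across cuts `A | B` and `A' | B'`,
say with `A ∩ A'` and `B ∩ B'` meeting `S`. A product across `A | B` satisfies
`ψ (A.piecewise x y) * ψ (A.piecewise y x) = ψ x * ψ y`, so supports are closed under splicing,
and splicing `u` with support points vanishing at a qubit of `S ∩ A ∩ A'` and of `S ∩ B ∩ B'`
gives a support point `v` with zeros in `S ∩ A` and `S ∩ B` that agrees with `u` where the cuts
differ. Splicing `u, v` along `A` or along `A'` then gives the same two strings, on which the
gate does not fire, and the two splice identities give `ψ u * ψ v = η * ψ u * ψ v`, so `η = 1`.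
-/

open Finset
open scoped symmDiff

theorem Finset.piecewise_eq_piecewise_of_eqOn_symmDiff {α : Type*} {δ : α → Sort*}
    [DecidableEq α] {s t : Finset α} {f g : ∀ a, δ a} (h : ∀ a ∈ s ∆ t, f a = g a) :
    s.piecewise f g = t.piecewise f g := by
  funext a
  by_cases hs : a ∈ s <;> by_cases ht : a ∈ t <;> simp_all [mem_symmDiff]

theorem Finset.inter_inter_nonempty_or_of_subset_union {α : Type*} [DecidableEq α]
    {S A B A' B' : Finset α}
    (hS : S ⊆ A ∪ B) (hS' : S ⊆ A' ∪ B')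
    (hAS : (A ∩ S).Nonempty) (hBS : (B ∩ S).Nonempty)
    (hA'S : (A' ∩ S).Nonempty) (hB'S : (B' ∩ S).Nonempty) :
    ((A ∩ A' ∩ S).Nonempty ∧ (B ∩ B' ∩ S).Nonempty) ∨
      ((A ∩ B' ∩ S).Nonempty ∧ (B ∩ A' ∩ S).Nonempty) := by
  simp only [Finset.Nonempty, mem_inter, subset_iff, mem_union] at *
  grind

variable {r : ℕ}

namespace SeparatesAt

variable {ψ : QState r} {A B : Finset (Fin r)}

theorem symm (h : SeparatesAt ψ A B) : SeparatesAt ψ B A := by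
  obtain ⟨f, g, hfg⟩ := h
  exact ⟨g, f, fun x => (hfg x).trans (mul_comm _ _)⟩

theorem exists_apply_piecewise (h : SeparatesAt ψ A B) (hAB : Disjoint A B) :
    ∃ (f : ({i // i ∈ A} → Bool) → ℂ) (g : ({i // i ∈ B} → Bool) → ℂ),
      ∀ x y : Fin r → Bool, ψ (A.piecewise x y) = f (fun i => x i) * g (fun i => y i) := by
  obtain ⟨f, g, hfg⟩ := h
  refine ⟨f, g, fun x y => ?_⟩
  rw [hfg]
  congr 2 <;> funext i
  · exact A.piecewise_eq_of_mem _ _ i.2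
  · exact A.piecewise_eq_of_notMem _ _ (disjoint_right.mp hAB i.2)

theorem apply_piecewise_mul_apply_piecewise (h : SeparatesAt ψ A B) (hAB : Disjoint A B)
    (x y : Fin r → Bool) :
    ψ (A.piecewise x y) * ψ (A.piecewise y x) = ψ x * ψ y := by
  obtain ⟨f, g, hfg⟩ := h.exists_apply_piecewise hAB
  have hψ (x : Fin r → Bool) : ψ x = f (fun i => x i) * g (fun i => x i) := by
    rw [← hfg, piecewise_same]
  rw [hfg, hfg, hψ x, hψ y]
  ring

theorem apply_piecewise_ne_zero (h : SeparatesAt ψ A B) (hAB : Disjoint A B)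
    {x y : Fin r → Bool} (hx : ψ x ≠ 0) (hy : ψ y ≠ 0) : ψ (A.piecewise x y) ≠ 0 := by
  obtain ⟨f, g, hfg⟩ := h.exists_apply_piecewise hAB
  rw [← piecewise_same A x, hfg] at hx
  rw [← piecewise_same A y, hfg] at hy
  rw [hfg]
  exact mul_ne_zero (left_ne_zero_of_mul hx) (right_ne_zero_of_mul hy)

end SeparatesAt

section Gate

variable {η : ℂ} {S T : Finset (Fin r)} {ψ : QState r} {x : Fin r → Bool}

theorem gGate_apply_of_forall (hx : ∀ i ∈ S, x i = true) : gGate η S ψ x = η * ψ x :=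
  if_pos hx

theorem gGate_apply_of_eq_false {i : Fin r} (hi : i ∈ S) (hx : x i = false) :
    gGate η S ψ x = ψ x :=
  if_neg fun h => by simp [h i hi] at hx

theorem gGate_apply_of_eq_zero (hx : ψ x = 0) : gGate η S ψ x = 0 := by
  unfold gGate
  split_ifs <;> simp [hx]

theorem gGate_apply_ne_zero_iff (hη : η ≠ 0) : gGate η S ψ x ≠ 0 ↔ ψ x ≠ 0 := by
  unfold gGate
  split_ifs <;> simp [hη]

theorem gGate_eq_self (h : ∀ x, ψ x ≠ 0 → ∃ i ∈ S, x i = false) : gGate η S ψ = ψ := by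
  funext x
  by_cases hx : ψ x = 0
  · rw [gGate_apply_of_eq_zero hx, hx]
  · obtain ⟨i, hi, hxi⟩ := h x hx
    exact gGate_apply_of_eq_false hi hxi

theorem gGate_ne_self (hη : η ≠ 1) {u : Fin r → Bool} (hu : ψ u ≠ 0)
    (huS : ∀ i ∈ S, u i = true) : gGate η S ψ ≠ ψ := by
  intro h
  have hu' := congrFun h u
  rw [gGate_apply_of_forall huS] at hu'
  exact hη (mul_right_cancel₀ hu (hu'.trans (one_mul _).symm))

theorem gGate_eq_gGate_of_subset (hTS : T ⊆ S) (hT : ∀ i ∈ S \ T, ∀ x, ψ x ≠ 0 → x i = true) :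
    gGate η S ψ = gGate η T ψ := by
  funext x
  by_cases hx : ψ x = 0
  · rw [gGate_apply_of_eq_zero hx, gGate_apply_of_eq_zero hx]
  have hfire : (∀ i ∈ S, x i = true) ↔ ∀ i ∈ T, x i = true := by
    refine ⟨fun h i hi => h i (hTS hi), fun h i hi => ?_⟩
    by_cases hiT : i ∈ T
    · exact h i hiT
    · exact hT i (mem_sdiff.mpr ⟨hi, hiT⟩) x hx
  unfold gGate
  simp only [hfire]

end Gate

section Splice

variable {η : ℂ} {S A B A' B' : Finset (Fin r)} {ψ : QState r}

theorem eq_one_of_separatesAt_gGate_of_eqOn_symmDiff (hAB : Disjoint A B)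
    (hA'B' : Disjoint A' B') (hψ : SeparatesAt ψ A B) (hφ : SeparatesAt (gGate η S ψ) A' B')
    {u v : Fin r → Bool} (hu : ψ u ≠ 0) (hv : ψ v ≠ 0) (huS : ∀ i ∈ S, u i = true)
    {i j : Fin r} (hiS : i ∈ S) (hiA : i ∈ A) (hvi : v i = false)
    (hjS : j ∈ S) (hjA : j ∉ A) (hvj : v j = false) (huv : ∀ k ∈ A ∆ A', u k = v k) :
    η = 1 := by
  have huv' : A.piecewise u v = A'.piecewise u v :=
    piecewise_eq_piecewise_of_eqOn_symmDiff huv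
  have hvu' : A.piecewise v u = A'.piecewise v u :=
    piecewise_eq_piecewise_of_eqOn_symmDiff fun k hk => (huv k hk).symm
  have hφsplice := hφ.apply_piecewise_mul_apply_piecewise hA'B' u v
  rw [← huv', ← hvu',
    gGate_apply_of_eq_false hjS (by rwa [piecewise_eq_of_notMem _ _ _ hjA]),
    gGate_apply_of_eq_false hiS (by rwa [piecewise_eq_of_mem _ _ _ hiA]),
    hψ.apply_piecewise_mul_apply_piecewise hAB, gGate_apply_of_forall huS,
    gGate_apply_of_eq_false hiS hvi] at hφsplice
  have hprod : (η - 1) * (ψ u * ψ v) = 0 := by linear_combination -hφsplice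
  exact sub_eq_zero.mp ((mul_eq_zero.mp hprod).resolve_right (mul_ne_zero hu hv))

theorem eq_one_of_separatesAt_gGate (hη : η ≠ 0) (hAB : Disjoint A B) (hA'B' : Disjoint A' B')
    (hψ : SeparatesAt ψ A B) (hφ : SeparatesAt (gGate η S ψ) A' B')
    {u : Fin r → Bool} (hu : ψ u ≠ 0) (huS : ∀ i ∈ S, u i = true)
    (hzero : ∀ k ∈ S, ∃ x, ψ x ≠ 0 ∧ x k = false)
    {i j : Fin r} (hi : i ∈ A ∩ A' ∩ S) (hj : j ∈ B ∩ B' ∩ S) : η = 1 := by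
  simp only [mem_inter] at hi hj
  obtain ⟨⟨hiA, hiA'⟩, hiS⟩ := hi
  obtain ⟨⟨hjB, hjB'⟩, hjS⟩ := hj
  have hjA : j ∉ A := disjoint_right.mp hAB hjB
  have hjA' : j ∉ A' := disjoint_right.mp hA'B' hjB'
  obtain ⟨z, hz, hzi⟩ := hzero i hiS
  obtain ⟨w, hw, hwj⟩ := hzero j hjS
  have hsupp {x y : Fin r → Bool} (hx : ψ x ≠ 0) (hy : ψ y ≠ 0) : ψ (A'.piecewise x y) ≠ 0 := by
    rw [← gGate_apply_ne_zero_iff hη] at hx hy ⊢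
    exact hφ.apply_piecewise_ne_zero hA'B' hx hy
  refine eq_one_of_separatesAt_gGate_of_eqOn_symmDiff hAB hA'B' hψ hφ hu
    (hψ.apply_piecewise_ne_zero hAB (hsupp hz hu) (hsupp hu hw)) huS
    hiS hiA ?_ hjS hjA ?_ ?_
  · simp [hiA, hiA', hzi]
  · simp [hjA, hjA', hwj]
  · intro k hk
    rcases mem_symmDiff.mp hk with ⟨hkA, hkA'⟩ | ⟨hkA', hkA⟩ <;> simp [*]

end Splice

theorem not_sSeparable_and_sSeparable_gGate {η : ℂ} {S : Finset (Fin r)} {ψ : QState r}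
    (hη : η ≠ 0) (hη1 : η ≠ 1) {u : Fin r → Bool} (hu : ψ u ≠ 0) (huS : ∀ i ∈ S, u i = true)
    (hzero : ∀ k ∈ S, ∃ x, ψ x ≠ 0 ∧ x k = false) :
    ¬ (SSeparable S ψ ∧ SSeparable S (gGate η S ψ)) := by
  rintro ⟨⟨A, B, ⟨-, -, hAB, hABu⟩, hAS, hBS, hψ⟩,
    ⟨A', B', ⟨-, -, hA'B', hA'B'u⟩, hA'S, hB'S, hφ⟩⟩
  rcases inter_inter_nonempty_or_of_subset_union (hABu ▸ subset_univ S) (hA'B'u ▸ subset_univ S)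
    hAS hBS hA'S hB'S with ⟨⟨i, hi⟩, ⟨j, hj⟩⟩ | ⟨⟨i, hi⟩, ⟨j, hj⟩⟩
  · exact hη1 (eq_one_of_separatesAt_gGate hη hAB hA'B' hψ hφ hu huS hzero hi hj)
  · exact hη1 (eq_one_of_separatesAt_gGate hη hAB hA'B'.symm hψ hφ.symm hu huS hzero hi hj)

theorem entanglement_lemma_general_phase_general (r : ℕ)
    (η : ℂ) (hη : ‖η‖ = 1) (hη1 : η ≠ 1)
    (S : Finset (Fin r))
    (ψ : QState r) :
    SEntangled S ψ ∨ SEntangled S (gGate η S ψ) ∨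
      (gGate η S ψ = ψ ∨
        ∃ T : Finset (Fin r), T ⊂ S ∧ gGate η S ψ = gGate η T ψ ∧ gGate η T ψ ≠ ψ) := by
  classical
  by_cases hψ : SSeparable S ψ; swap
  · exact Or.inl hψ
  by_cases hφ : SSeparable S (gGate η S ψ); swap
  · exact Or.inr (Or.inl hφ)
  refine Or.inr (Or.inr ?_)
  by_cases htriv : ∀ x, ψ x ≠ 0 → ∃ i ∈ S, x i = false
  · exact Or.inl (gGate_eq_self htriv)
  push Not at htriv
  obtain ⟨u, hu, huS⟩ := htriv
  simp only [ne_eq, Bool.not_eq_false] at huS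
  set T := S.filter fun i => ∃ x, ψ x ≠ 0 ∧ x i = false
  rcases (filter_subset _ S : T ⊆ S).eq_or_ssubset with hTS | hTS
  · have hη0 : η ≠ 0 := by rintro rfl; simp at hη
    refine (not_sSeparable_and_sSeparable_gGate hη0 hη1 hu huS (fun k hk => ?_) ⟨hψ, hφ⟩).elim
    rw [← hTS, mem_filter] at hk
    exact hk.2
  refine Or.inr ⟨T, hTS, gGate_eq_gGate_of_subset hTS.subset fun i hi x hx => ?_,
    gGate_ne_self hη1 hu fun i hi => huS i (hTS.subset hi)⟩
  rw [mem_sdiff, mem_filter] at hi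
  by_contra hxi
  exact hi.2 ⟨hi.1, x, hx, by simpa using hxi⟩

theorem entanglement_lemma_general_phase (r : ℕ) (hr : 1 ≤ r)
    (η : ℂ) (hη : ‖η‖ = 1) (hη1 : η ≠ 1)
    (S : Finset (Fin r)) (hS : 2 ≤ S.card)
    (ψ : QState r) (hψ : UnitVec ψ) :
    SEntangled S ψ ∨ SEntangled S (gGate η S ψ) ∨
      (gGate η S ψ = ψ ∨
        ∃ T : Finset (Fin r), T ⊂ S ∧ gGate η S ψ = gGate η T ψ ∧ gGate η T ψ ≠ ψ) :=
  entanglement_lemma_general_phase_general r η hη hη1 S ψ
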